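/- Let λ ∈ ℂ with |λ| > 1. Partition a matrix D ∈ ℂ^{2n×2m} into four n×m blocks D = [[D₁₁, D₁₂],[D₂₁, D₂₂]]. Let V be the complex subspace of ℂ^{2n×2m} consisting of all such D with D₁₁ = 0, D₂₂ = 0, with D₂₁ nonzero only in its first column if n ≤ m (only in its last row if n > m), and with D₁₂ nonzero only in its last column if n ≤ m (only in its first row if n > m). Then for every pair (B,A) ∈ ℂ^{2n×2m} × ℂ^{2m×2n} there exists exactly one D ∈ V such that (B − D, A) ∈ T(H_m(λ), H_n(λ)); that is, ℂ^{2n×2m} × ℂ^{2m×2n} = T(H_m(λ), H_n(λ)) ⊕_ℝ (V × {0}). -/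

import Mathlib

open Matrix

/-- The `n×n` upper-triangular Jordan block with eigenvalue `l`. -/
noncomputable def Jmat (n : ℕ) (l : ℂ) : Matrix (Fin n) (Fin n) ℂ :=
  Matrix.of fun i j =>
    if (i : ℕ) = (j : ℕ) then l
    else if (j : ℕ) = (i : ℕ) + 1 then 1 else 0

/-- The symmetric matrix `Δ_n`: (1-based) entry `(j,k)` is `1` if `j+k = n+1`,
`i` if `j+k = n+2`, and `0` otherwise. -/
noncomputable def Dmat (n : ℕ) : Matrix (Fin n) (Fin n) ℂ :=
  Matrix.of fun i j =>
    if (i : ℕ) + (j : ℕ) + 1 = n then 1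
    else if (i : ℕ) + (j : ℕ) = n then Complex.I
    else 0

/-- The `2m×2m` block matrix `H_m(l) = [[0, I],[J_m(l), 0]]`. -/
noncomputable def Hmat (m : ℕ) (l : ℂ) : Matrix (Fin m ⊕ Fin m) (Fin m ⊕ Fin m) ℂ :=
  Matrix.fromBlocks 0 1 (Jmat m l) 0

/-- `T(A) = {CᴴA + AC}`, the tangent space to the *congruence class of `A`. -/
def Tset {n : Type*} [Fintype n] (A : Matrix n n ℂ) : Set (Matrix n n ℂ) :=
  {X | ∃ C : Matrix n n ℂ, X = Cᴴ * A + A * C}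

/-- `T(M,N) = {(SᴴM + NR, RᴴN + MS)}`. -/
def Tpair {p q : Type*} [Fintype p] [Fintype q]
    (M : Matrix p p ℂ) (N : Matrix q q ℂ) :
    Set (Matrix q p ℂ × Matrix p q ℂ) :=
  {X | ∃ (S : Matrix p q ℂ) (R : Matrix q p ℂ),
      X = (Sᴴ * M + N * R, Rᴴ * N + M * S)}

/-!
Write `S` and `R` in `2 × 2` block form. Then `(X, A) ∈ T(H_m(λ), H_n(λ))` splits into four
independent block conditions. Two of them are Stein equations `W - P W Q = E` in which `P - a` and
`Q - b` are nilpotent and `a b = |λ|² ≠ 1`; these are always solvable, since `1 - P(·)Q` is a scalar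
plus a nilpotent operator. The other two say that `X₂₁ - A₁₂ᴴ J_m` and `X₁₂ᴴ - A₂₁ J_n⁻¹` lie in the
range of the Sylvester operator `R ↦ J R - R J`, which only sees the nilpotent shifts. For a
`p × q` matrix with `p ≤ q` that range has the first column as a complement, because the
difference `R_{a+1,b+1} - R_{a,b}` can be inverted by summing along diagonals. When `q ≤ p` the
complement is the last row, obtained by reflecting in the anti-diagonal, which fixes `J` and
reverses products. So `D₂₁` and `D₁₂` are determined uniquely, and `D₁₁ = D₂₂ = 0`.
-/

namespace Jmat

variable {p : ℕ}

theorem isUpperTriangular (p : ℕ) (l : ℂ) : (Jmat p l).IsUpperTriangular := by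
  intro i j (hij : (j : ℕ) < i)
  have h1 : (i : ℕ) ≠ j := by omega
  have h2 : (j : ℕ) ≠ i + 1 := by omega
  simp [Jmat, h1, h2]

@[simp]
theorem apply_self (l : ℂ) (i : Fin p) : Jmat p l i i = l := by
  simp [Jmat]

theorem det_eq (p : ℕ) (l : ℂ) : (Jmat p l).det = l ^ p := by
  simp [det_of_isUpperTriangular (isUpperTriangular p l)]

theorem isUnit (p : ℕ) {l : ℂ} (hl : l ≠ 0) : IsUnit (Jmat p l) := by
  rw [isUnit_iff_isUnit_det, det_eq]
  exact (pow_ne_zero p hl).isUnit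

theorem zero_apply (i j : Fin p) : Jmat p 0 i j = if (j : ℕ) = i + 1 then 1 else 0 := by
  by_cases h : (i : ℕ) = j <;> simp [Jmat, h]

theorem isNilpotent_zero (p : ℕ) : IsNilpotent (Jmat p 0) := by
  refine ⟨p, ?_⟩
  have := aeval_self_charpoly (Jmat p 0)
  rw [charpoly_of_isUpperTriangular _ (isUpperTriangular p 0)] at this
  simpa [apply_self] using this

theorem eq_smul_one_add (p : ℕ) (l : ℂ) : Jmat p l = l • 1 + Jmat p 0 := by
  ext i j
  by_cases h : i = j
  · simp [Jmat, h]
  · have h' : (i : ℕ) ≠ j := Fin.val_ne_of_ne h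
    simp [Jmat, h, h']

theorem isNilpotent_sub_smul (p : ℕ) (l : ℂ) : IsNilpotent (Jmat p l - l • 1) := by
  simpa [eq_smul_one_add p l] using isNilpotent_zero p

theorem isNilpotent_conjTranspose_sub_smul (p : ℕ) (l : ℂ) :
    IsNilpotent ((Jmat p l)ᴴ - star l • 1) := by
  obtain ⟨k, hk⟩ := isNilpotent_sub_smul p l
  refine ⟨k, ?_⟩
  rw [← conjTranspose_one, ← conjTranspose_smul, ← conjTranspose_sub, ← conjTranspose_pow, hk,
    conjTranspose_zero]

end Jmat

theorem isUnit_one_sub_mul_of_isNilpotent_sub {K A : Type*} [CommRing K] [Ring A] [Algebra K A]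
    {x y : A} {a b : K} (hxy : Commute x y) (hx : IsNilpotent (x - algebraMap K A a))
    (hy : IsNilpotent (y - algebraMap K A b)) (hab : IsUnit (1 - a * b)) :
    IsUnit (1 - x * y) := by
  have hx' : Commute (x - algebraMap K A a) y := hxy.sub_left (Algebra.commutes a y)
  have hy' : Commute y (y - algebraMap K A b) :=
    (Commute.refl y).sub_right (Algebra.commutes b y).symm
  have hxy' : Commute (x - algebraMap K A a) (y - algebraMap K A b) :=
    hx'.sub_right (Algebra.commutes b _).symm
  have hnil : IsNilpotent (x * y - algebraMap K A (a * b)) := by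
    have h : x * y - algebraMap K A (a * b)
        = (x - algebraMap K A a) * y + a • (y - algebraMap K A b) := by
      simp only [map_mul, sub_mul, mul_sub, Algebra.smul_def]
      abel
    rw [h]
    exact ((hxy'.mul_left hy').smul_right a).isNilpotent_add
      (hx'.isNilpotent_mul_right hx) (hy.smul a)
  have h : 1 - x * y = algebraMap K A (1 - a * b) + -(x * y - algebraMap K A (a * b)) := by
    simp only [map_sub, map_one]
    abel
  rw [h]
  exact hnil.neg.isUnit_add_left_of_commute (hab.map _) (Algebra.commutes _ _).symm

theorem Matrix.exists_sub_mul_mul_eq {K m n : Type*} [CommRing K] [Fintype m] [Fintype n]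
    [DecidableEq m] [DecidableEq n] {P : Matrix m m K} {Q : Matrix n n K} {a b : K}
    (hP : IsNilpotent (P - a • 1)) (hQ : IsNilpotent (Q - b • 1)) (hab : IsUnit (1 - a * b))
    (E : Matrix m n K) : ∃ W : Matrix m n K, W - P * W * Q = E := by
  have hx : mulLeftLinearMap n K P - algebraMap K _ a = mulLeftLinearMap n K (P - a • 1) := by
    ext W : 1
    simp [Matrix.sub_mul]
  have hy : mulRightLinearMap m K Q - algebraMap K _ b = mulRightLinearMap m K (Q - b • 1) := by
    ext W : 1
    simp [Matrix.mul_sub]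
  have hxy : Commute (mulLeftLinearMap n K P) (mulRightLinearMap m K Q) :=
    commute_mulLeftLinearMap_mulRightLinearMap P Q
  obtain ⟨k, hk⟩ := hP
  obtain ⟨k', hk'⟩ := hQ
  have hunit := isUnit_one_sub_mul_of_isNilpotent_sub hxy
    ⟨k, by rw [hx, pow_mulLeftLinearMap, hk, mulLeftLinearMap_zero_eq_zero]⟩
    ⟨k', by rw [hy, pow_mulRightLinearMap, hk', mulRightLinearMap_zero_eq_zero]⟩ hab
  obtain ⟨W, hW⟩ := ((Module.End.isUnit_iff _).1 hunit).2 E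
  exact ⟨W, by simpa [Matrix.mul_assoc] using hW⟩

theorem isUnit_one_sub_star_mul_self {l : ℂ} (hl : ‖l‖ ≠ 1) : IsUnit (1 - star l * l) := by
  rw [isUnit_iff_ne_zero, sub_ne_zero]
  intro h
  have := congrArg norm h
  simp only [norm_one, norm_mul, norm_star] at this
  exact hl (by nlinarith [norm_nonneg l])

section natEntry

variable {α : Type*} [Zero α] {p q : ℕ}

def natEntry (R : Matrix (Fin p) (Fin q) α) (a b : ℕ) : α :=
  if h : a < p ∧ b < q then R ⟨a, h.1⟩ ⟨b, h.2⟩ else 0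

@[simp]
theorem natEntry_val (R : Matrix (Fin p) (Fin q) α) (i : Fin p) (j : Fin q) :
    natEntry R i j = R i j := by
  simp [natEntry]

theorem natEntry_of_le (R : Matrix (Fin p) (Fin q) α) {a : ℕ} (b : ℕ) (ha : p ≤ a) :
    natEntry R a b = 0 := by
  simp [natEntry, show ¬a < p by omega]

end natEntry

theorem Fin.sum_ite_val_eq {M : Type*} [AddCommMonoid M] (q c : ℕ) (f : ℕ → M) :
    ∑ t : Fin q, (if (t : ℕ) = c then f t else 0) = if c < q then f c else 0 := by
  rw [Fin.sum_univ_eq_sum_range (fun k => if k = c then f k else 0), Finset.sum_ite_eq']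
  simp

section shift

variable {p q : ℕ}

theorem Jmat_zero_mul_apply (R : Matrix (Fin p) (Fin q) ℂ) (i : Fin p) (j : Fin q) :
    (Jmat p 0 * R) i j = natEntry R (i + 1) j := by
  have h : ∀ t : Fin p, Jmat p 0 i t * R t j =
      if (t : ℕ) = i + 1 then natEntry R t j else 0 := by
    intro t
    simp [Jmat.zero_apply]
  rw [mul_apply, Finset.sum_congr rfl fun t _ => h t, Fin.sum_ite_val_eq p _ (natEntry R · j)]
  split_ifs with hi
  · rfl
  · exact (natEntry_of_le R _ (not_lt.1 hi)).symm

theorem mul_Jmat_zero_apply_of_val_eq_zero (R : Matrix (Fin p) (Fin q) ℂ) (i : Fin p) (j : Fin q)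
    (hj : (j : ℕ) = 0) : (R * Jmat q 0) i j = 0 := by
  simp [mul_apply, Jmat.zero_apply, hj]

theorem mul_Jmat_zero_apply_of_val_eq_succ (R : Matrix (Fin p) (Fin q) ℂ) (i : Fin p)
    (j : Fin q) {b : ℕ} (hj : (j : ℕ) = b + 1) : (R * Jmat q 0) i j = natEntry R i b := by
  have h : ∀ t : Fin q, R i t * Jmat q 0 t j = if (t : ℕ) = b then natEntry R i t else 0 := by
    intro t
    simp [Jmat.zero_apply, hj, eq_comm]
  rw [mul_apply, Finset.sum_congr rfl fun t _ => h t, Fin.sum_ite_val_eq q _ (natEntry R i ·),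
    if_pos (by omega)]

end shift

noncomputable def sylvester (p q : ℕ) (l : ℂ) :
    Matrix (Fin p) (Fin q) ℂ →ₗ[ℂ] Matrix (Fin p) (Fin q) ℂ :=
  mulLeftLinearMap (Fin q) ℂ (Jmat p l) - mulRightLinearMap (Fin p) ℂ (Jmat q l)

namespace sylvester

variable {p q : ℕ} {l : ℂ}

theorem apply (R : Matrix (Fin p) (Fin q) ℂ) :
    sylvester p q l R = Jmat p l * R - R * Jmat q l :=
  rfl

theorem apply_eq_Jmat_zero (R : Matrix (Fin p) (Fin q) ℂ) :
    sylvester p q l R = Jmat p 0 * R - R * Jmat q 0 := by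
  rw [apply, Jmat.eq_smul_one_add p l, Jmat.eq_smul_one_add q l]
  simp only [Matrix.add_mul, Matrix.mul_add, Matrix.smul_mul, Matrix.mul_smul, Matrix.one_mul,
    Matrix.mul_one]
  abel

theorem apply_apply_of_val_eq_zero (R : Matrix (Fin p) (Fin q) ℂ) (i : Fin p) {j : Fin q}
    (hj : (j : ℕ) = 0) : sylvester p q l R i j = natEntry R (i + 1) 0 := by
  rw [apply_eq_Jmat_zero, Matrix.sub_apply, Jmat_zero_mul_apply,
    mul_Jmat_zero_apply_of_val_eq_zero R i j hj, hj, sub_zero]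

theorem apply_apply_of_val_eq_succ (R : Matrix (Fin p) (Fin q) ℂ) (i : Fin p) {j : Fin q} {b : ℕ}
    (hj : (j : ℕ) = b + 1) : sylvester p q l R i j = natEntry R (i + 1) j - natEntry R i b := by
  rw [apply_eq_Jmat_zero, Matrix.sub_apply, Jmat_zero_mul_apply,
    mul_Jmat_zero_apply_of_val_eq_succ R i j hj]

theorem exists_apply_eq_off_firstCol (l : ℂ) (E : Matrix (Fin p) (Fin q) ℂ) :
    ∃ R, ∀ (i : Fin p) (j : Fin q), (j : ℕ) ≠ 0 → sylvester p q l R i j = E i j := by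
  -- Summing `E` along diagonals inverts the difference `R (a + 1) (b + 1) - R a b`.
  let r (a b : ℕ) : ℂ := -∑ k ∈ Finset.range p, natEntry E (a + k) (b + 1 + k)
  let R : Matrix (Fin p) (Fin q) ℂ := of fun i j => r i j
  have hr : ∀ a b, b < q → natEntry R a b = r a b := by
    intro a b hb
    by_cases ha : a < p
    · simp [R, natEntry, ha, hb]
    · simp [natEntry_of_le _ _ (not_lt.1 ha), r,
        Finset.sum_eq_zero fun k _ => natEntry_of_le E (b + 1 + k) (show p ≤ a + k by omega)]
  refine ⟨R, fun i j hj => ?_⟩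
  obtain ⟨b, hb⟩ : ∃ b, (j : ℕ) = b + 1 := Nat.exists_eq_succ_of_ne_zero hj
  let f (k : ℕ) : ℂ := natEntry E (i + k) (j + k)
  have h₁ : r (i + 1) j = -∑ k ∈ Finset.range p, f (k + 1) := by
    simp only [r, f, add_assoc, add_comm 1]
  have h₂ : r i b = -∑ k ∈ Finset.range p, f k := by
    simp only [r, f, hb]
  rw [apply_apply_of_val_eq_succ _ i hb, hr _ _ j.isLt, hr _ _ (by omega), h₁, h₂,
    neg_sub_neg, ← Finset.sum_sub_distrib, Finset.sum_range_sub']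
  simp [f, natEntry_of_le E _ (show p ≤ i + p by omega)]

theorem eq_zero_of_apply_eq_zero_off_firstCol (hpq : p ≤ q) (R : Matrix (Fin p) (Fin q) ℂ)
    (h : ∀ (i : Fin p) (j : Fin q), (j : ℕ) ≠ 0 → sylvester p q l R i j = 0) :
    sylvester p q l R = 0 := by
  have step : ∀ a b, b + 1 < q → natEntry R a b = natEntry R (a + 1) (b + 1) := by
    intro a b hb
    by_cases ha : a < p
    · have := h ⟨a, ha⟩ ⟨b + 1, hb⟩ (by simp)
      rw [apply_apply_of_val_eq_succ _ _ rfl] at this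
      exact (sub_eq_zero.1 this).symm
    · rw [natEntry_of_le R _ (by omega), natEntry_of_le R _ (by omega)]
  have diag : ∀ t a b, b + t < q → natEntry R a b = natEntry R (a + t) (b + t) := by
    intro t
    induction t with
    | zero => simp
    | succ t ih =>
      intro a b hb
      rw [ih a b (by omega), step _ _ (by omega)]
      rfl
  -- `R` is constant along diagonals, and as `p ≤ q` the diagonal through `(i + 1, 0)` leaves the
  -- matrix through its bottom edge, where `natEntry R` vanishes.
  ext i j
  by_cases hj : (j : ℕ) = 0
  · rw [apply_apply_of_val_eq_zero _ _ hj, diag (p - (i + 1)) _ _ (by omega),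
      natEntry_of_le R _ (by omega), Matrix.zero_apply]
  · exact h i j hj

theorem existsUnique_sub_mem_range_firstCol (hpq : p ≤ q) (l : ℂ)
    (E : Matrix (Fin p) (Fin q) ℂ) :
    ∃! D : Matrix (Fin p) (Fin q) ℂ,
      (∀ (i : Fin p) (j : Fin q), (j : ℕ) ≠ 0 → D i j = 0) ∧
        E - D ∈ LinearMap.range (sylvester p q l) := by
  obtain ⟨R, hR⟩ := exists_apply_eq_off_firstCol l E
  refine ⟨E - sylvester p q l R, ⟨fun i j hj => by simp [hR i j hj], by simp⟩, ?_⟩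
  rintro D ⟨hD, R', hR'⟩
  have h₀ : sylvester p q l (R - R') = 0 :=
    eq_zero_of_apply_eq_zero_off_firstCol hpq _ fun i j hj => by
      simp [hR i j hj, hR', hD i j hj]
  rw [map_sub, sub_eq_zero, hR'] at h₀
  rw [h₀, sub_sub_cancel]

end sylvester

section antiTranspose

variable {α : Type*} {p q r : ℕ}

def antiTranspose (X : Matrix (Fin p) (Fin q) α) : Matrix (Fin q) (Fin p) α :=
  (X.submatrix Fin.rev Fin.rev)ᵀ

@[simp]
theorem antiTranspose_apply (X : Matrix (Fin p) (Fin q) α) (i : Fin q) (j : Fin p) :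
    antiTranspose X i j = X j.rev i.rev :=
  rfl

@[simp]
theorem antiTranspose_antiTranspose (X : Matrix (Fin p) (Fin q) α) :
    antiTranspose (antiTranspose X) = X := by
  ext
  simp

theorem antiTranspose_sub [Sub α] (X Y : Matrix (Fin p) (Fin q) α) :
    antiTranspose (X - Y) = antiTranspose X - antiTranspose Y :=
  rfl

theorem antiTranspose_mul [CommSemiring α] (X : Matrix (Fin p) (Fin q) α)
    (Y : Matrix (Fin q) (Fin r) α) :
    antiTranspose (X * Y) = antiTranspose Y * antiTranspose X := by
  rw [antiTranspose, antiTranspose, antiTranspose, ← transpose_mul]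
  exact congrArg transpose (submatrix_mul_equiv X Y Fin.rev Fin.revPerm Fin.rev).symm

end antiTranspose

@[simp]
theorem antiTranspose_Jmat (p : ℕ) (l : ℂ) : antiTranspose (Jmat p l) = Jmat p l := by
  ext i j
  simp only [antiTranspose_apply, Jmat, of_apply, Fin.val_rev]
  have := i.isLt
  have := j.isLt
  by_cases h : (i : ℕ) = j
  · simp [h]
  · rw [if_neg (by omega), if_neg h]
    congr 1
    simp only [eq_iff_iff]
    omega

namespace sylvester

variable {p q : ℕ} {l : ℂ}

theorem antiTranspose_apply_eq_neg (R : Matrix (Fin p) (Fin q) ℂ) :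
    antiTranspose (sylvester p q l R) = -sylvester q p l (antiTranspose R) := by
  simp [apply, antiTranspose_sub, antiTranspose_mul]

theorem antiTranspose_mem_range {X : Matrix (Fin p) (Fin q) ℂ}
    (h : X ∈ LinearMap.range (sylvester p q l)) :
    antiTranspose X ∈ LinearMap.range (sylvester q p l) := by
  obtain ⟨R, rfl⟩ := h
  exact ⟨-antiTranspose R, by rw [map_neg, antiTranspose_apply_eq_neg]⟩

theorem antiTranspose_mem_range_iff {X : Matrix (Fin p) (Fin q) ℂ} :
    antiTranspose X ∈ LinearMap.range (sylvester q p l) ↔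
      X ∈ LinearMap.range (sylvester p q l) :=
  ⟨fun h => antiTranspose_antiTranspose X ▸ antiTranspose_mem_range h, antiTranspose_mem_range⟩

theorem existsUnique_sub_mem_range_lastRow (hqp : q ≤ p) (l : ℂ)
    (E : Matrix (Fin p) (Fin q) ℂ) :
    ∃! D : Matrix (Fin p) (Fin q) ℂ,
      (∀ (i : Fin p) (j : Fin q), (i : ℕ) + 1 ≠ p → D i j = 0) ∧
        E - D ∈ LinearMap.range (sylvester p q l) := by
  let e : Matrix (Fin p) (Fin q) ℂ ≃ Matrix (Fin q) (Fin p) ℂ :=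
    ⟨antiTranspose, antiTranspose, antiTranspose_antiTranspose, antiTranspose_antiTranspose⟩
  refine (e.existsUnique_congr fun D => ?_).2
    (existsUnique_sub_mem_range_firstCol hqp l (antiTranspose E))
  simp only [e, Equiv.coe_fn_mk]
  refine and_congr ?_ ?_
  · constructor
    · intro h i j hj
      exact h _ _ (by simp; omega)
    · intro h i j hi
      simpa using h j.rev i.rev (by simp; omega)
  · rw [← antiTranspose_sub]
    exact antiTranspose_mem_range_iff.symm

variable {m n : ℕ}

theorem apply_mul_of_commute {C : Matrix (Fin q) (Fin q) ℂ} (hC : Commute C (Jmat q l))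
    (R : Matrix (Fin p) (Fin q) ℂ) : sylvester p q l (R * C) = sylvester p q l R * C := by
  simp only [apply, Matrix.sub_mul, Matrix.mul_assoc, hC.eq]

theorem mul_Jmat_mem_range_iff (hl : l ≠ 0) {X : Matrix (Fin p) (Fin q) ℂ} :
    X * Jmat q l ∈ LinearMap.range (sylvester p q l) ↔
      X ∈ LinearMap.range (sylvester p q l) := by
  obtain ⟨u, hu⟩ := Jmat.isUnit q hl
  constructor
  · rintro ⟨R, hR⟩
    refine ⟨R * (↑u⁻¹ : Matrix (Fin q) (Fin q) ℂ), ?_⟩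
    rw [apply_mul_of_commute (hu ▸ (Commute.refl _).units_inv_left), hR, ← hu, Matrix.mul_assoc,
      Units.mul_inv, Matrix.mul_one]
  · rintro ⟨R, rfl⟩
    exact ⟨R * Jmat q l, apply_mul_of_commute (Commute.refl _) R⟩

theorem existsUnique_complement₂₁ (l : ℂ) (E : Matrix (Fin n) (Fin m) ℂ) :
    ∃! D : Matrix (Fin n) (Fin m) ℂ,
      ((n ≤ m → ∀ (i : Fin n) (j : Fin m), (j : ℕ) ≠ 0 → D i j = 0) ∧
        (m < n → ∀ (i : Fin n) (j : Fin m), (i : ℕ) + 1 ≠ n → D i j = 0)) ∧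
      E - D ∈ LinearMap.range (sylvester n m l) := by
  rcases le_or_gt n m with h | h
  · simpa [h, not_lt.2 h] using existsUnique_sub_mem_range_firstCol h l E
  · simpa [h, not_le.2 h] using existsUnique_sub_mem_range_lastRow h.le l E

theorem existsUnique_complement₁₂ (l : ℂ) (E : Matrix (Fin m) (Fin n) ℂ) :
    ∃! D : Matrix (Fin n) (Fin m) ℂ,
      ((n ≤ m → ∀ (i : Fin n) (j : Fin m), (j : ℕ) + 1 ≠ m → D i j = 0) ∧
        (m < n → ∀ (i : Fin n) (j : Fin m), (i : ℕ) ≠ 0 → D i j = 0)) ∧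
      E - Dᴴ ∈ LinearMap.range (sylvester m n l) := by
  let e := (conjTransposeAddEquiv (Fin n) (Fin m) ℂ).toEquiv
  rcases le_or_gt n m with h | h
  · refine (e.existsUnique_congr fun D => ?_).2 (existsUnique_sub_mem_range_lastRow h l E)
    simp [h, not_lt.2 h, e, forall_comm (α := Fin n)]
  · refine (e.existsUnique_congr fun D => ?_).2 (existsUnique_sub_mem_range_firstCol h.le l E)
    simp [h, not_le.2 h, e, forall_comm (α := Fin n)]

end sylvester

theorem Matrix.existsUnique_offDiag {α k o r s : Type*} [Zero α]
    {P₁₂ : Matrix k s α → Prop} {P₂₁ : Matrix o r α → Prop}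
    (h₁₂ : ∃! x, P₁₂ x) (h₂₁ : ∃! y, P₂₁ y) :
    ∃! D : Matrix (k ⊕ o) (r ⊕ s) α,
      (D.toBlocks₁₁ = 0 ∧ D.toBlocks₂₂ = 0) ∧ P₁₂ D.toBlocks₁₂ ∧ P₂₁ D.toBlocks₂₁ := by
  obtain ⟨x, hx, hx'⟩ := h₁₂
  obtain ⟨y, hy, hy'⟩ := h₂₁
  refine ⟨fromBlocks 0 x y 0, by simp [hx, hy], ?_⟩
  rintro D ⟨⟨h₁₁, h₂₂⟩, h₁₂, h₂₁⟩
  rw [← fromBlocks_toBlocks D, h₁₁, h₂₂, hx' _ h₁₂, hy' _ h₂₁]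

section Hmat

variable {m n : ℕ} {l : ℂ}

theorem conjTranspose_mul_Hmat_add_Hmat_mul (S : Matrix (Fin m ⊕ Fin m) (Fin n ⊕ Fin n) ℂ)
    (R : Matrix (Fin n ⊕ Fin n) (Fin m ⊕ Fin m) ℂ) :
    Sᴴ * Hmat m l + Hmat n l * R = fromBlocks
      (S.toBlocks₂₁ᴴ * Jmat m l + R.toBlocks₂₁) (S.toBlocks₁₁ᴴ + R.toBlocks₂₂)
      (S.toBlocks₂₂ᴴ * Jmat m l + Jmat n l * R.toBlocks₁₁)
      (S.toBlocks₁₂ᴴ + Jmat n l * R.toBlocks₁₂) := by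
  conv_lhs => rw [← fromBlocks_toBlocks S, ← fromBlocks_toBlocks R]
  simp [Hmat, fromBlocks_conjTranspose, fromBlocks_multiply, fromBlocks_add]

theorem mem_Tpair_Hmat_iff {X : Matrix (Fin n ⊕ Fin n) (Fin m ⊕ Fin m) ℂ}
    {A : Matrix (Fin m ⊕ Fin m) (Fin n ⊕ Fin n) ℂ} :
    (X, A) ∈ Tpair (Hmat m l) (Hmat n l) ↔
      (∃ (S : Matrix (Fin m) (Fin n) ℂ) (R : Matrix (Fin n) (Fin m) ℂ),
        X.toBlocks₁₁ = Sᴴ * Jmat m l + R ∧ A.toBlocks₁₁ = Rᴴ * Jmat n l + S) ∧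
      (∃ (S : Matrix (Fin m) (Fin n) ℂ) (R : Matrix (Fin n) (Fin m) ℂ),
        X.toBlocks₁₂ = Sᴴ + R ∧ A.toBlocks₂₁ = Rᴴ * Jmat n l + Jmat m l * S) ∧
      (∃ (S : Matrix (Fin m) (Fin n) ℂ) (R : Matrix (Fin n) (Fin m) ℂ),
        X.toBlocks₂₁ = Sᴴ * Jmat m l + Jmat n l * R ∧ A.toBlocks₁₂ = Rᴴ + S) ∧
      (∃ (S : Matrix (Fin m) (Fin n) ℂ) (R : Matrix (Fin n) (Fin m) ℂ),
        X.toBlocks₂₂ = Sᴴ + Jmat n l * R ∧ A.toBlocks₂₂ = Rᴴ + Jmat m l * S) := by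
  simp only [Tpair, Set.mem_ofPred_eq, Prod.mk.injEq, conjTranspose_mul_Hmat_add_Hmat_mul]
  constructor
  · rintro ⟨S, R, rfl, rfl⟩
    simp only [toBlocks_fromBlocks₁₁, toBlocks_fromBlocks₁₂, toBlocks_fromBlocks₂₁,
      toBlocks_fromBlocks₂₂]
    exact ⟨⟨_, _, rfl, rfl⟩, ⟨_, _, rfl, rfl⟩, ⟨_, _, rfl, rfl⟩, ⟨_, _, rfl, rfl⟩⟩
  · rintro ⟨⟨S₂₁, R₂₁, hX₁₁, hA₁₁⟩, ⟨S₁₁, R₂₂, hX₁₂, hA₂₁⟩, ⟨S₂₂, R₁₁, hX₂₁, hA₁₂⟩,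
      ⟨S₁₂, R₁₂, hX₂₂, hA₂₂⟩⟩
    refine ⟨fromBlocks S₁₁ S₁₂ S₂₁ S₂₂, fromBlocks R₁₁ R₁₂ R₂₁ R₂₂, ?_, ?_⟩
    · rw [← fromBlocks_toBlocks X, hX₁₁, hX₁₂, hX₂₁, hX₂₂]
      simp
    · rw [← fromBlocks_toBlocks A, hA₁₁, hA₁₂, hA₂₁, hA₂₂]
      simp

theorem exists_block₁₁ (hl : ‖l‖ ≠ 1) (X : Matrix (Fin n) (Fin m) ℂ)
    (Y : Matrix (Fin m) (Fin n) ℂ) :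
    ∃ (S : Matrix (Fin m) (Fin n) ℂ) (R : Matrix (Fin n) (Fin m) ℂ),
      X = Sᴴ * Jmat m l + R ∧ Y = Rᴴ * Jmat n l + S := by
  obtain ⟨S, hS⟩ := exists_sub_mul_mul_eq (Jmat.isNilpotent_conjTranspose_sub_smul m l)
    (Jmat.isNilpotent_sub_smul n l) (isUnit_one_sub_star_mul_self hl) (Y - Xᴴ * Jmat n l)
  refine ⟨S, X - Sᴴ * Jmat m l, by abel, ?_⟩
  rw [conjTranspose_sub, conjTranspose_mul, conjTranspose_conjTranspose, Matrix.sub_mul]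
  have hY : Y = S - (Jmat m l)ᴴ * S * Jmat n l + Xᴴ * Jmat n l := by rw [hS]; abel
  rw [hY]
  abel

theorem exists_block₂₂ (hl : ‖l‖ ≠ 1) (X : Matrix (Fin n) (Fin m) ℂ)
    (Y : Matrix (Fin m) (Fin n) ℂ) :
    ∃ (S : Matrix (Fin m) (Fin n) ℂ) (R : Matrix (Fin n) (Fin m) ℂ),
      X = Sᴴ + Jmat n l * R ∧ Y = Rᴴ + Jmat m l * S := by
  obtain ⟨W, hW⟩ := exists_sub_mul_mul_eq (Jmat.isNilpotent_sub_smul m l)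
    (Jmat.isNilpotent_conjTranspose_sub_smul n l)
    (mul_comm (star l) l ▸ isUnit_one_sub_star_mul_self hl) (Y - Jmat m l * Xᴴ)
  refine ⟨Xᴴ - W * (Jmat n l)ᴴ, Wᴴ, ?_, ?_⟩
  · rw [conjTranspose_sub, conjTranspose_mul, conjTranspose_conjTranspose,
      conjTranspose_conjTranspose, sub_add_cancel]
  · rw [conjTranspose_conjTranspose, Matrix.mul_sub, ← Matrix.mul_assoc]
    have hY : Y = W - Jmat m l * W * (Jmat n l)ᴴ + Jmat m l * Xᴴ := by rw [hW]; abel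
    rw [hY]
    abel

theorem exists_block₂₁_iff (X : Matrix (Fin n) (Fin m) ℂ) (Y : Matrix (Fin m) (Fin n) ℂ) :
    (∃ (S : Matrix (Fin m) (Fin n) ℂ) (R : Matrix (Fin n) (Fin m) ℂ),
      X = Sᴴ * Jmat m l + Jmat n l * R ∧ Y = Rᴴ + S) ↔
    X - Yᴴ * Jmat m l ∈ LinearMap.range (sylvester n m l) := by
  constructor
  · rintro ⟨S, R, rfl, rfl⟩
    refine ⟨R, ?_⟩
    rw [sylvester.apply, conjTranspose_add, conjTranspose_conjTranspose, Matrix.add_mul]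
    abel
  · rintro ⟨R, hR⟩
    refine ⟨Y - Rᴴ, R, ?_, by abel⟩
    rw [conjTranspose_sub, conjTranspose_conjTranspose, Matrix.sub_mul]
    rw [sylvester.apply, eq_sub_iff_add_eq] at hR
    rw [← hR]
    abel

theorem exists_block₁₂_iff (hl : l ≠ 0) (X : Matrix (Fin n) (Fin m) ℂ)
    (Y : Matrix (Fin m) (Fin n) ℂ) :
    (∃ (S : Matrix (Fin m) (Fin n) ℂ) (R : Matrix (Fin n) (Fin m) ℂ),
      X = Sᴴ + R ∧ Y = Rᴴ * Jmat n l + Jmat m l * S) ↔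
    Xᴴ - Y * (Jmat n l)⁻¹ ∈ LinearMap.range (sylvester m n l) := by
  have hJ : (Xᴴ - Y * (Jmat n l)⁻¹) * Jmat n l = -(Y - Xᴴ * Jmat n l) := by
    rw [Matrix.sub_mul, Matrix.mul_assoc, nonsing_inv_mul _ ((Jmat.isUnit n hl).map detMonoidHom),
      Matrix.mul_one, neg_sub]
  rw [← sylvester.mul_Jmat_mem_range_iff hl, hJ, neg_mem_iff]
  constructor
  · rintro ⟨S, R, rfl, rfl⟩
    refine ⟨S, ?_⟩
    rw [sylvester.apply, conjTranspose_add, conjTranspose_conjTranspose, Matrix.add_mul]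
    abel
  · rintro ⟨S, hS⟩
    refine ⟨S, X - Sᴴ, by abel, ?_⟩
    rw [conjTranspose_sub, conjTranspose_conjTranspose, Matrix.sub_mul]
    rw [sylvester.apply, eq_sub_iff_add_eq] at hS
    rw [← hS]
    abel

theorem mem_Tpair_Hmat_iff_mem_range (hl : ‖l‖ ≠ 1) (hl₀ : l ≠ 0)
    {X : Matrix (Fin n ⊕ Fin n) (Fin m ⊕ Fin m) ℂ}
    {A : Matrix (Fin m ⊕ Fin m) (Fin n ⊕ Fin n) ℂ} :
    (X, A) ∈ Tpair (Hmat m l) (Hmat n l) ↔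
      X.toBlocks₂₁ - A.toBlocks₁₂ᴴ * Jmat m l ∈ LinearMap.range (sylvester n m l) ∧
        X.toBlocks₁₂ᴴ - A.toBlocks₂₁ * (Jmat n l)⁻¹ ∈ LinearMap.range (sylvester m n l) := by
  rw [mem_Tpair_Hmat_iff, exists_block₂₁_iff, exists_block₁₂_iff hl₀]
  simp only [exists_block₁₁ hl, exists_block₂₂ hl, true_and, and_true]
  exact and_comm

end Hmat

/-- For `|λ| > 1`: `ℂ^{2n×2m} × ℂ^{2m×2n} = T(H_m(λ), H_n(λ)) ⊕_ℝ (V × {0})`,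
where `D = [[D₁₁,D₁₂],[D₂₁,D₂₂]] ∈ V` iff `D₁₁ = D₂₂ = 0`, `D₂₁` is supported in
its first column if `n ≤ m` (its last row if `n > m`), and `D₁₂` is supported in
its last column if `n ≤ m` (its first row if `n > m`). -/
theorem stmt12 (m n : ℕ) (l : ℂ) (hl : 1 < ‖l‖)
    (B : Matrix (Fin n ⊕ Fin n) (Fin m ⊕ Fin m) ℂ)
    (A : Matrix (Fin m ⊕ Fin m) (Fin n ⊕ Fin n) ℂ) :
    ∃! D : Matrix (Fin n ⊕ Fin n) (Fin m ⊕ Fin m) ℂ,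
      (D.toBlocks₁₁ = 0 ∧ D.toBlocks₂₂ = 0 ∧
       (n ≤ m →
          (∀ (i : Fin n) (j : Fin m), (j : ℕ) ≠ 0 → D.toBlocks₂₁ i j = 0) ∧
          (∀ (i : Fin n) (j : Fin m), (j : ℕ) + 1 ≠ m → D.toBlocks₁₂ i j = 0)) ∧
       (m < n →
          (∀ (i : Fin n) (j : Fin m), (i : ℕ) + 1 ≠ n → D.toBlocks₂₁ i j = 0) ∧
          (∀ (i : Fin n) (j : Fin m), (i : ℕ) ≠ 0 → D.toBlocks₁₂ i j = 0))) ∧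
      (B - D, A) ∈ Tpair (Hmat m l) (Hmat n l) := by
  have h₁₂ := sylvester.existsUnique_complement₁₂ l
    (B.toBlocks₁₂ᴴ - A.toBlocks₂₁ * (Jmat n l)⁻¹)
  have h₂₁ := sylvester.existsUnique_complement₂₁ l (B.toBlocks₂₁ - A.toBlocks₁₂ᴴ * Jmat m l)
  refine (existsUnique_congr fun D => ?_).1 (existsUnique_offDiag h₁₂ h₂₁)
  have hl₀ : l ≠ 0 := norm_pos_iff.1 (one_pos.trans hl)
  rw [mem_Tpair_Hmat_iff_mem_range hl.ne' hl₀]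
  have e₂₁ : (B - D).toBlocks₂₁ - A.toBlocks₁₂ᴴ * Jmat m l
      = B.toBlocks₂₁ - A.toBlocks₁₂ᴴ * Jmat m l - D.toBlocks₂₁ := sub_right_comm _ _ _
  have e₁₂ : (B - D).toBlocks₁₂ᴴ - A.toBlocks₂₁ * (Jmat n l)⁻¹
      = B.toBlocks₁₂ᴴ - A.toBlocks₂₁ * (Jmat n l)⁻¹ - D.toBlocks₁₂ᴴ := by
    rw [← sub_right_comm, ← conjTranspose_sub]
    rfl
  rw [e₂₁, e₁₂]
  tauto
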